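/- arXiv:2104.01368 — 3 statements merged into one kernel-verified Lean document; each statement's English description precedes it below -/
import Mathlib

section
/- Suppose the X°×X° matrix S = (I_{X°} − P_{X°})² + P_{X°,∂X} P_{∂X,X°} is invertible. Then for every f ∈ L(X°) and g ∈ L(∂X) there is a unique u ∈ L(X) such that Δ²u = f on X° and u = g on ∂X. It is given by u_{∂X} = g and u_{X°} = S^{-1}( f + U g ), where U = (I_{X°} − P_{X°}) P_{X°,∂X} + P_{X°,∂X} (I_{∂X} − P_{∂X}). -/
/-!
Split `u` into its interior part `u°` and boundary part `u∂`. On either side of the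
partition `Δ` acts blockwise, `(Δu)° = (P_{X°} − I)u° + P_{X°,∂X}u∂` and
`(Δu)∂ = P_{∂X,X°}u° + (P_{∂X} − I)u∂`, and composing the two formulas gives
`(Δ²u)° = S u° − U u∂`. With `u∂ = g`, the interior equation is therefore the linear system
`S u° = f + U g`, which has exactly one solution when `S` is invertible.
-/

open Matrix Finset

/-- The Laplacian `Δu = Pu − u` acting on complex functions. -/
noncomputable def lap {X : Type*} [Fintype X] (P : Matrix X X ℝ) (u : X → ℂ) (x : X) : ℂ :=
  (∑ y, (P x y : ℂ) * u y) - u x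

/-- The `A × A` submatrix of `P`. -/
def subMatrix {X : Type*} (P : Matrix X X ℝ) (A : Finset X) : Matrix A A ℝ :=
  Matrix.of fun x y => P x.1 y.1

/-- The `A × B` block of `P`. -/
def subMatrix2 {X : Type*} (P : Matrix X X ℝ) (A B : Finset X) : Matrix A B ℝ :=
  Matrix.of fun x y => P x.1 y.1

/-- The matrix `S = (I_{X°} − P_{X°})² + P_{X°,∂X} P_{∂X,X°}`. -/
noncomputable def Smat {X : Type*} [Fintype X] [DecidableEq X] (P : Matrix X X ℝ)
    (Bnd : Finset X) : Matrix ↥Bndᶜ ↥Bndᶜ ℝ :=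
  (1 - subMatrix P Bndᶜ) ^ 2 + subMatrix2 P Bndᶜ Bnd * subMatrix2 P Bnd Bndᶜ

/-- The matrix `U = (I_{X°} − P_{X°})P_{X°,∂X} + P_{X°,∂X}(I_{∂X} − P_{∂X})`. -/
noncomputable def Umat {X : Type*} [Fintype X] [DecidableEq X] (P : Matrix X X ℝ)
    (Bnd : Finset X) : Matrix ↥Bndᶜ ↥Bnd ℝ :=
  (1 - subMatrix P Bndᶜ) * subMatrix2 P Bndᶜ Bnd +
    subMatrix2 P Bndᶜ Bnd * (1 - subMatrix P Bnd)

namespace Matrix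

variable {n : Type*} [Fintype n] [DecidableEq n]

lemma mulVec_eq_iff_eq_inv_mulVec {R : Type*} [CommRing R] {M : Matrix n n R} (hM : IsUnit M)
    {v w : n → R} : M *ᵥ v = w ↔ v = M⁻¹ *ᵥ w := by
  have hdet := (isUnit_iff_isUnit_det M).1 hM
  constructor
  · rintro rfl
    rw [mulVec_mulVec, nonsing_inv_mul _ hdet, one_mulVec]
  · rintro rfl
    rw [mulVec_mulVec, mul_nonsing_inv _ hdet, one_mulVec]

lemma map_nonsing_inv {R S : Type*} [CommRing R] [CommRing S] (f : R →+* S)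
    {M : Matrix n n R} (hM : IsUnit M) : (M.map f)⁻¹ = M⁻¹.map f := by
  refine inv_eq_left_inv ?_
  rw [← Matrix.map_mul, nonsing_inv_mul _ ((isUnit_iff_isUnit_det M).1 hM),
    Matrix.map_one _ f.map_zero f.map_one]

end Matrix

namespace Finset

variable {X β : Type*} [Fintype X] [DecidableEq X]

lemma exists_restrict_eq_and_restrict_compl_eq (A : Finset X) (a : A → β)
    (b : ↥Aᶜ → β) : ∃ u : X → β, A.restrict u = a ∧ Aᶜ.restrict u = b :=
  ⟨fun x => if hx : x ∈ A then a ⟨x, hx⟩ else b ⟨x, mem_compl.2 hx⟩,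
    by ext ⟨x, hx⟩; simp [hx], by ext ⟨x, hx⟩; simp [mem_compl.1 hx]⟩

lemma eq_of_restrict_eq_of_restrict_compl_eq {A : Finset X} {u v : X → β}
    (h : A.restrict u = A.restrict v) (hc : Aᶜ.restrict u = Aᶜ.restrict v) : u = v := by
  funext x
  by_cases hx : x ∈ A
  · exact congrFun h ⟨x, hx⟩
  · exact congrFun hc ⟨x, mem_compl.2 hx⟩

end Finset

section

variable {X : Type*} [Fintype X] [DecidableEq X]

/-- The complement is passed as `B` so that `A := Bndᶜ` can be used with `B := Bnd`
(`Bndᶜᶜ` is not syntactically `Bnd`). -/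
lemma restrict_lap (P : Matrix X X ℝ) {A B : Finset X} (hB : Aᶜ = B) (v : X → ℂ) :
    A.restrict (lap P v) = ((subMatrix P A).map Complex.ofRealHom - 1) *ᵥ A.restrict v
      + (subMatrix2 P A B).map Complex.ofRealHom *ᵥ B.restrict v := by
  subst hB
  ext ⟨x, hx⟩
  simp only [Finset.restrict, lap, sub_mulVec, one_mulVec, Pi.add_apply, Pi.sub_apply, mulVec,
    dotProduct, map_apply, Complex.ofRealHom_eq_coe, subMatrix, subMatrix2, of_apply]
  rw [Finset.sum_coe_sort A (fun y => (P x y : ℂ) * v y),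
    Finset.sum_coe_sort Aᶜ (fun y => (P x y : ℂ) * v y), ← Finset.sum_add_sum_compl A]
  ring

lemma Smat_map_ofRealHom (P : Matrix X X ℝ) (Bnd : Finset X) :
    (Smat P Bnd).map Complex.ofRealHom
      = (1 - (subMatrix P Bndᶜ).map Complex.ofRealHom) ^ 2 +
        (subMatrix2 P Bndᶜ Bnd).map Complex.ofRealHom *
          (subMatrix2 P Bnd Bndᶜ).map Complex.ofRealHom := by
  simp [Smat, Matrix.map_add, Matrix.map_mul, Matrix.map_sub, sq]

lemma Umat_map_ofRealHom (P : Matrix X X ℝ) (Bnd : Finset X) :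
    (Umat P Bnd).map Complex.ofRealHom
      = (1 - (subMatrix P Bndᶜ).map Complex.ofRealHom) *
          (subMatrix2 P Bndᶜ Bnd).map Complex.ofRealHom +
        (subMatrix2 P Bndᶜ Bnd).map Complex.ofRealHom *
          (1 - (subMatrix P Bnd).map Complex.ofRealHom) := by
  simp [Umat, Matrix.map_add, Matrix.map_mul, Matrix.map_sub]

lemma restrict_compl_lap_lap (P : Matrix X X ℝ) (Bnd : Finset X) (u : X → ℂ) :
    Bndᶜ.restrict (lap P (lap P u)) = (Smat P Bnd).map Complex.ofRealHom *ᵥ Bndᶜ.restrict u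
      - (Umat P Bnd).map Complex.ofRealHom *ᵥ Bnd.restrict u := by
  rw [restrict_lap P (compl_compl Bnd), restrict_lap P (compl_compl Bnd), restrict_lap P rfl,
    Smat_map_ofRealHom, Umat_map_ofRealHom]
  set A := (subMatrix P Bndᶜ).map Complex.ofRealHom
  set B := (subMatrix2 P Bndᶜ Bnd).map Complex.ofRealHom
  set C := (subMatrix2 P Bnd Bndᶜ).map Complex.ofRealHom
  set D := (subMatrix P Bnd).map Complex.ofRealHom
  have hS : (1 - A) ^ 2 + B * C = (A - 1) * (A - 1) + B * C := by noncomm_ring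
  have hU : (1 - A) * B + B * (1 - D) = -((A - 1) * B + B * (D - 1)) := by
    simp only [Matrix.sub_mul, Matrix.mul_sub, Matrix.one_mul, Matrix.mul_one]
    abel
  rw [hS, hU]
  simp only [mulVec_add, add_mulVec, neg_mulVec, mulVec_mulVec]
  abel

lemma bilaplace_dirichlet_iff (P : Matrix X X ℝ) {Bnd : Finset X} (hS : IsUnit (Smat P Bnd))
    (f g u : X → ℂ) :
    ((∀ x, x ∉ Bnd → lap P (lap P u) x = f x) ∧ (∀ x ∈ Bnd, u x = g x)) ↔
      Bnd.restrict u = Bnd.restrict g ∧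
        Bndᶜ.restrict u = (Smat P Bnd)⁻¹.map Complex.ofRealHom *ᵥ
          (Bndᶜ.restrict f + (Umat P Bnd).map Complex.ofRealHom *ᵥ Bnd.restrict g) := by
  have hint : (∀ x, x ∉ Bnd → lap P (lap P u) x = f x) ↔
      Bndᶜ.restrict (lap P (lap P u)) = Bndᶜ.restrict f := by
    simp [funext_iff, Finset.restrict]
  have hbnd : (∀ x ∈ Bnd, u x = g x) ↔ Bnd.restrict u = Bnd.restrict g := by
    simp [funext_iff, Finset.restrict]
  have hSℂ : IsUnit ((Smat P Bnd).map Complex.ofRealHom) := hS.map Complex.ofRealHom.mapMatrix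
  rw [hint, hbnd, and_comm, restrict_compl_lap_lap, ← map_nonsing_inv _ hS,
    ← mulVec_eq_iff_eq_inv_mulVec hSℂ, sub_eq_iff_eq_add]
  refine and_congr_right fun h => ?_
  rw [h]

end

theorem bilaplace_dirichlet_problem_general {X : Type*} [Fintype X] [DecidableEq X]
    (P : Matrix X X ℝ)
    (Bnd : Finset X)
    (hS : IsUnit (Smat P Bnd))
    (f g : X → ℂ) :
    (∃! u : X → ℂ,
      (∀ x, x ∉ Bnd → lap P (lap P u) x = f x) ∧ (∀ x ∈ Bnd, u x = g x)) ∧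
    (∀ u : X → ℂ,
      ((∀ x, x ∉ Bnd → lap P (lap P u) x = f x) ∧ (∀ x ∈ Bnd, u x = g x)) →
      ∀ x, ∀ hx : x ∈ Bndᶜ,
        u x = ∑ y : ↥Bndᶜ, (((Smat P Bnd)⁻¹ ⟨x, hx⟩ y : ℝ) : ℂ) *
          (f y.1 + ∑ z : ↥Bnd, ((Umat P Bnd y z : ℝ) : ℂ) * g z.1)) := by
  have hsol := bilaplace_dirichlet_iff P hS f g
  obtain ⟨u₀, hu₀_bnd, hu₀_int⟩ := Bnd.exists_restrict_eq_and_restrict_compl_eq (Bnd.restrict g)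
    ((Smat P Bnd)⁻¹.map Complex.ofRealHom *ᵥ
      (Bndᶜ.restrict f + (Umat P Bnd).map Complex.ofRealHom *ᵥ Bnd.restrict g))
  refine ⟨⟨u₀, (hsol u₀).2 ⟨hu₀_bnd, hu₀_int⟩, fun u hu => ?_⟩, fun u hu x hx => ?_⟩
  · obtain ⟨hbnd, hint⟩ := (hsol u).1 hu
    exact eq_of_restrict_eq_of_restrict_compl_eq (hbnd.trans hu₀_bnd.symm)
      (hint.trans hu₀_int.symm)
  · simpa [mulVec, dotProduct] using congrFun ((hsol u).1 hu).2 ⟨x, hx⟩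

/-- If `S` is invertible, the bi-Laplace Dirichlet problem
`Δ²u = f` on `X°`, `u = g` on `∂X` has a unique solution, given by
`u_{X°} = S⁻¹(f + Ug)` and `u_{∂X} = g`. -/
theorem bilaplace_dirichlet_problem {X : Type*} [Fintype X] [DecidableEq X]
    (P : Matrix X X ℝ)
    (hcard : 1 < Fintype.card X)
    (hnonneg : ∀ x y, 0 ≤ P x y)
    (hrow : ∀ x, ∑ y, P x y = 1)
    (hirr : ∀ x y, ∃ n, 1 ≤ n ∧ 0 < (P ^ n) x y)
    (Bnd : Finset X) (hB : Bnd.Nonempty) (hB' : Bnd ≠ Finset.univ)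
    (hS : IsUnit (Smat P Bnd))
    (f g : X → ℂ) :
    (∃! u : X → ℂ,
      (∀ x, x ∉ Bnd → lap P (lap P u) x = f x) ∧ (∀ x ∈ Bnd, u x = g x)) ∧
    (∀ u : X → ℂ,
      ((∀ x, x ∉ Bnd → lap P (lap P u) x = f x) ∧ (∀ x ∈ Bnd, u x = g x)) →
      ∀ x, ∀ hx : x ∈ Bndᶜ,
        u x = ∑ y : ↥Bndᶜ, (((Smat P Bnd)⁻¹ ⟨x, hx⟩ y : ℝ) : ℂ) *
          (f y.1 + ∑ z : ↥Bnd, ((Umat P Bnd y z : ℝ) : ℂ) * g z.1)) :=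
  bilaplace_dirichlet_problem_general P Bnd hS f g
end

section
/- The ∂X×∂X matrix Q = P_{∂X} + P_{∂X,X°} G_{X°} P_{X°,∂X} is stochastic (all entries are nonnegative and every row sums to 1) and irreducible, and the restriction π_{∂X} of π to ∂X is stationary for Q, i.e. π_{∂X} Q = π_{∂X}. -/
open Matrix Finset

/-- The Green kernel `G_A = (I_A − P_A)⁻¹`. -/
noncomputable def green {X : Type*} [DecidableEq X] (P : Matrix X X ℝ) (A : Finset X) :
    Matrix A A ℝ :=
  (1 - subMatrix P A)⁻¹

/-- The transition matrix `Q = P_{∂X} + P_{∂X,X°} G_{X°} P_{X°,∂X}` of the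
boundary Markov chain. -/
noncomputable def Qmat {X : Type*} [Fintype X] [DecidableEq X] (P : Matrix X X ℝ)
    (Bnd : Finset X) : Matrix ↥Bnd ↥Bnd ℝ :=
  subMatrix P Bnd + subMatrix2 P Bnd Bndᶜ * green P Bndᶜ * subMatrix2 P Bndᶜ Bnd

/-!
Write `A = Bᶜ` for the interior and `M = P_A`. By irreducibility, a function that is
superharmonic for `P` wherever it is negative, and nonnegative somewhere, is nonnegative:
its minimum would spread along positive transitions to every state. Applied to `w` on `A`
extended by zero, this shows that `M w ≤ w` forces `w ≥ 0`; hence `1 - M` is invertible and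
`G = (1 - M)⁻¹ ≥ 0`.

For `P f = f`, the interior rows give `P_{A,B} f_B = (1 - M) f_A`, so `G P_{A,B} f_B = f_A`
and `Q f_B = P_B f_B + P_{B,A} f_A = f_B`. With `f = 1` this gives the row sums; since
`Q` built from `Pᵀ` is `Qᵀ`, the same identity for `Pᵀ` gives `π_B Q = π_B`.

For irreducibility, cut a positive `P`-path between boundary points at its visits to `B`.
Along an interior stretch the entrance weights `E = P_{B,A} G` stay positive because
`E = P_{B,A} + E M`, and the stretch ends with a positive `Q`-step `Q ≥ E P_{A,B}`.
-/

open Relation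

namespace Matrix

section

variable {n R : Type*} [Fintype n] [DecidableEq n] [Semiring R] [LinearOrder R]
  [IsStrictOrderedRing R] {A : Matrix n n R}

theorem pow_succ_apply_pos_iff (hA : ∀ i j, 0 ≤ A i j) (k : ℕ) (i j : n) :
    0 < (A ^ (k + 1)) i j ↔ ∃ l, 0 < (A ^ k) i l ∧ 0 < A l j := by
  have hterm : ∀ l, 0 ≤ (A ^ k) i l * A l j := fun l =>
    mul_nonneg (pow_apply_nonneg hA k i l) (hA l j)
  simp only [pow_succ, mul_apply, Finset.sum_pos_iff_of_nonneg fun l _ => hterm l,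
    Finset.mem_univ, true_and]
  refine exists_congr fun l => ⟨fun h => ?_, fun h => mul_pos h.1 h.2⟩
  exact (pos_and_pos_or_neg_and_neg_of_mul_pos h).resolve_right
    fun h' => (pow_apply_nonneg hA k i l).not_gt h'.1

theorem transGen_iff_exists_pow_apply_pos (hA : ∀ i j, 0 ≤ A i j) {i j : n} :
    TransGen (fun i j => 0 < A i j) i j ↔ ∃ k, 1 ≤ k ∧ 0 < (A ^ k) i j := by
  constructor
  · intro h
    induction h with
    | single hij => exact ⟨1, le_rfl, by rwa [pow_one]⟩
    | tail _ hlj ih =>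
      obtain ⟨k, hk, hpos⟩ := ih
      exact ⟨k + 1, by omega, (pow_succ_apply_pos_iff hA k _ _).2 ⟨_, hpos, hlj⟩⟩
  · rintro ⟨k, hk, hpos⟩
    induction k, hk using Nat.le_induction generalizing j with
    | base => exact .single (by rwa [pow_one] at hpos)
    | succ k _ ih =>
      obtain ⟨l, hil, hlj⟩ := (pow_succ_apply_pos_iff hA k i j).1 hpos
      exact (ih hil).tail hlj

end

section

variable {X : Type*} [Fintype X] [DecidableEq X] {P : Matrix X X ℝ}

theorem nonneg_of_mulVec_le_of_neg (hP : P ∈ rowStochastic ℝ X)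
    (hconn : ∀ x y, TransGen (fun x y => 0 < P x y) x y) {u : X → ℝ}
    (hsuper : ∀ x, u x < 0 → (P *ᵥ u) x ≤ u x) {b : X} (hb : 0 ≤ u b) (x : X) :
    0 ≤ u x := by
  by_contra! hx
  obtain ⟨a, -, ha⟩ := Finset.exists_min_image Finset.univ u ⟨x, Finset.mem_univ x⟩
  have hmin : ∀ y, u a ≤ u y := fun y => ha y (Finset.mem_univ y)
  have hneg : u a < 0 := (hmin x).trans_lt hx
  -- at a minimum, `u y ≥ ∑ z, P y z * u z` forces every successor `z` of `y` to be a minimum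
  have hspread : ∀ y z, u y = u a → 0 < P y z → u z = u a := by
    intro y z hy hyz
    have hterms : ∀ z, 0 ≤ P y z * (u z - u a) := fun z =>
      mul_nonneg (nonneg_of_mem_rowStochastic hP) (sub_nonneg.2 (hmin z))
    have hsum : ∑ z, P y z * (u z - u a) = 0 := by
      refine le_antisymm ?_ (Finset.sum_nonneg fun z _ => hterms z)
      have := hsuper y (hy ▸ hneg)
      simp only [mulVec, dotProduct] at this
      simp only [mul_sub, Finset.sum_sub_distrib, ← Finset.sum_mul,
        sum_row_of_mem_rowStochastic hP, one_mul]
      linarith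
    have := (Finset.sum_eq_zero_iff_of_nonneg fun z _ => hterms z).1 hsum z (Finset.mem_univ z)
    linarith [(mul_eq_zero.1 this).resolve_left hyz.ne']
  have hreach : ∀ y, TransGen (fun x y => 0 < P x y) a y → u y = u a := by
    intro y h
    induction h with
    | single h => exact hspread _ _ rfl h
    | tail _ h ih => exact hspread _ _ ih h
  linarith [hreach b (hconn a b)]

end

end Matrix

theorem subMatrix2_mulVec_add_subMatrix2_compl_mulVec {X : Type*} [Fintype X] [DecidableEq X]
    (P : Matrix X X ℝ) (S B : Finset X) (u : X → ℝ) :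
    subMatrix2 P S B *ᵥ (fun b : B => u b) + subMatrix2 P S Bᶜ *ᵥ (fun a : ↥Bᶜ => u a) =
      fun s : S => (P *ᵥ u) s := by
  funext s
  simp only [Pi.add_apply, mulVec, dotProduct, subMatrix2, of_apply]
  rw [Finset.sum_coe_sort B fun x => P s x * u x, Finset.sum_coe_sort Bᶜ fun x => P s x * u x,
    Finset.sum_add_sum_compl]

theorem subMatrix_transpose {X : Type*} (P : Matrix X X ℝ) (A : Finset X) :
    subMatrix Pᵀ A = (subMatrix P A)ᵀ := rfl

theorem green_mul_one_sub_subMatrix {X : Type*} [DecidableEq X] {P : Matrix X X ℝ}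
    {A : Finset X} (h : IsUnit (1 - subMatrix P A).det) :
    green P A * (1 - subMatrix P A) = 1 :=
  nonsing_inv_mul _ h

theorem one_sub_subMatrix_mul_green {X : Type*} [DecidableEq X] {P : Matrix X X ℝ}
    {A : Finset X} (h : IsUnit (1 - subMatrix P A).det) :
    (1 - subMatrix P A) * green P A = 1 :=
  mul_nonsing_inv _ h

theorem green_transpose {X : Type*} [DecidableEq X] (P : Matrix X X ℝ) (A : Finset X) :
    green Pᵀ A = (green P A)ᵀ := by
  rw [green, green, transpose_nonsing_inv, transpose_sub, transpose_one, subMatrix_transpose]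

theorem Qmat_transpose {X : Type*} [Fintype X] [DecidableEq X] (P : Matrix X X ℝ)
    (B : Finset X) : Qmat Pᵀ B = (Qmat P B)ᵀ := by
  rw [Qmat, Qmat, green_transpose, subMatrix_transpose, transpose_add, transpose_mul,
    transpose_mul, Matrix.mul_assoc]
  rfl


section InteriorGreen

variable {X : Type*} [Fintype X] [DecidableEq X] {P : Matrix X X ℝ} {B : Finset X}

theorem nonneg_of_subMatrix_compl_mulVec_le (hP : P ∈ rowStochastic ℝ X)
    (hconn : ∀ x y, TransGen (fun x y => 0 < P x y) x y) (hB : B.Nonempty)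
    {w : ↥Bᶜ → ℝ} (hw : subMatrix P Bᶜ *ᵥ w ≤ w) : 0 ≤ w := by
  obtain ⟨b, hb⟩ := hB
  let u : X → ℝ := fun x => if h : x ∈ Bᶜ then w ⟨x, h⟩ else 0
  have hu_bnd : (fun b : B => u b) = 0 :=
    funext fun b => dif_neg (Finset.notMem_compl.2 b.2)
  have hu_int : (fun a : ↥Bᶜ => u a) = w := funext fun a => dif_pos a.2
  have hPu : ∀ a : ↥Bᶜ, (P *ᵥ u) a = (subMatrix P Bᶜ *ᵥ w) a := by
    intro a
    rw [← congrFun (subMatrix2_mulVec_add_subMatrix2_compl_mulVec P Bᶜ B u) a, hu_bnd, hu_int,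
      mulVec_zero, zero_add]
    rfl
  have hsuper : ∀ x, u x < 0 → (P *ᵥ u) x ≤ u x := by
    intro x hx
    by_cases hxB : x ∈ Bᶜ
    · rw [hPu ⟨x, hxB⟩, congrFun hu_int ⟨x, hxB⟩]
      exact hw ⟨x, hxB⟩
    · have hux : u x = 0 := congrFun hu_bnd ⟨x, Finset.notMem_compl.1 hxB⟩
      linarith
  intro a
  rw [← hu_int]
  exact nonneg_of_mulVec_le_of_neg hP hconn hsuper (congrFun hu_bnd ⟨b, hb⟩).ge a

theorem isUnit_det_one_sub_subMatrix_compl (hP : P ∈ rowStochastic ℝ X)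
    (hconn : ∀ x y, TransGen (fun x y => 0 < P x y) x y) (hB : B.Nonempty) :
    IsUnit (1 - subMatrix P Bᶜ).det := by
  rw [isUnit_iff_ne_zero]
  intro hdet
  obtain ⟨v, hv0, hv⟩ := exists_mulVec_eq_zero_iff.2 hdet
  have hfix : subMatrix P Bᶜ *ᵥ v = v := by
    rw [sub_mulVec, one_mulVec, sub_eq_zero] at hv
    exact hv.symm
  have hfix_neg : subMatrix P Bᶜ *ᵥ (-v) = -v := by rw [mulVec_neg, hfix]
  exact hv0 (le_antisymm
    (neg_nonneg.1 (nonneg_of_subMatrix_compl_mulVec_le hP hconn hB hfix_neg.le))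
    (nonneg_of_subMatrix_compl_mulVec_le hP hconn hB hfix.le))

theorem green_compl_nonneg (hP : P ∈ rowStochastic ℝ X)
    (hconn : ∀ x y, TransGen (fun x y => 0 < P x y) x y) (hB : B.Nonempty) (a c : ↥Bᶜ) :
    0 ≤ green P Bᶜ a c := by
  have hMG : subMatrix P Bᶜ * green P Bᶜ = green P Bᶜ - 1 := by
    rw [← one_sub_subMatrix_mul_green (isUnit_det_one_sub_subMatrix_compl hP hconn hB),
      sub_mul, one_mul, sub_sub_cancel]
  refine nonneg_of_subMatrix_compl_mulVec_le hP hconn hB (w := fun a => green P Bᶜ a c)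
    (fun a => ?_) a
  change (subMatrix P Bᶜ * green P Bᶜ) a c ≤ green P Bᶜ a c
  rw [hMG, Matrix.sub_apply, one_apply]
  split_ifs <;> norm_num

end InteriorGreen

section BoundaryChain

variable {X : Type*} [Fintype X] [DecidableEq X] {P : Matrix X X ℝ} {B : Finset X}

theorem Qmat_mulVec_of_mulVec_eq (hdet : IsUnit (1 - subMatrix P Bᶜ).det) {f : X → ℝ}
    (hf : P *ᵥ f = f) : Qmat P B *ᵥ (fun b : B => f b) = fun b : B => f b := by
  have hbnd := subMatrix2_mulVec_add_subMatrix2_compl_mulVec P B B f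
  have hint := subMatrix2_mulVec_add_subMatrix2_compl_mulVec P Bᶜ B f
  rw [hf] at hbnd hint
  have hentry : green P Bᶜ *ᵥ (subMatrix2 P Bᶜ B *ᵥ fun b : B => f b) = fun a : ↥Bᶜ => f a := by
    have hexit : subMatrix2 P Bᶜ B *ᵥ (fun b : B => f b) =
        (1 - subMatrix P Bᶜ) *ᵥ fun a : ↥Bᶜ => f a := by
      rw [sub_mulVec, one_mulVec]
      exact eq_sub_of_add_eq hint
    rw [hexit, mulVec_mulVec, green_mul_one_sub_subMatrix hdet, one_mulVec]
  rw [Qmat, add_mulVec, ← mulVec_mulVec, ← mulVec_mulVec, hentry]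
  exact hbnd

theorem vecMul_Qmat_of_vecMul_eq (hdet : IsUnit (1 - subMatrix P Bᶜ).det) {f : X → ℝ}
    (hf : f ᵥ* P = f) : (fun b : B => f b) ᵥ* Qmat P B = fun b : B => f b := by
  have hdetT : IsUnit (1 - subMatrix Pᵀ Bᶜ).det := by
    rwa [subMatrix_transpose, ← transpose_one, ← transpose_sub, det_transpose]
  rw [← mulVec_transpose, ← Qmat_transpose]
  exact Qmat_mulVec_of_mulVec_eq hdetT (by rwa [mulVec_transpose])

end BoundaryChain

section Irreducibility

variable {X : Type*} [Fintype X] [DecidableEq X] {P : Matrix X X ℝ} {B : Finset X}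

/-- Extends the rows of `Qmat P B` to all targets: at an interior `z` the entry is the expected
number of visits to `z` before the chain started at `b` returns to `B`. -/
noncomputable def boundaryKernel (P : Matrix X X ℝ) (B : Finset X) : Matrix B X ℝ :=
  of fun b z => P b z + ∑ a : ↥Bᶜ, (subMatrix2 P B Bᶜ * green P Bᶜ) b a * P a z

theorem Qmat_apply_eq_boundaryKernel (b b' : B) :
    Qmat P B b b' = boundaryKernel P B b b' := rfl

theorem subMatrix2_mul_green_nonneg (hP : ∀ x y, 0 ≤ P x y)
    (hG : ∀ a c, 0 ≤ green P Bᶜ a c) (b : B) (a : ↥Bᶜ) :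
    0 ≤ (subMatrix2 P B Bᶜ * green P Bᶜ) b a :=
  Finset.sum_nonneg fun c _ => mul_nonneg (hP _ _) (hG c a)

theorem le_boundaryKernel (hP : ∀ x y, 0 ≤ P x y) (hG : ∀ a c, 0 ≤ green P Bᶜ a c)
    (b : B) (z : X) : P b z ≤ boundaryKernel P B b z :=
  le_add_of_nonneg_right <| Finset.sum_nonneg fun a _ =>
    mul_nonneg (subMatrix2_mul_green_nonneg hP hG b a) (hP _ _)

theorem Qmat_nonneg (hP : ∀ x y, 0 ≤ P x y) (hG : ∀ a c, 0 ≤ green P Bᶜ a c) (b b' : B) :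
    0 ≤ Qmat P B b b' := by
  rw [Qmat_apply_eq_boundaryKernel]
  exact (hP b b').trans (le_boundaryKernel hP hG b b')

theorem boundaryKernel_apply_compl (hdet : IsUnit (1 - subMatrix P Bᶜ).det) (b : B)
    (a : ↥Bᶜ) : boundaryKernel P B b a = (subMatrix2 P B Bᶜ * green P Bᶜ) b a := by
  set E := subMatrix2 P B Bᶜ * green P Bᶜ
  have hE : subMatrix2 P B Bᶜ + E * subMatrix P Bᶜ = E := by
    have h : E * (1 - subMatrix P Bᶜ) = subMatrix2 P B Bᶜ := by
      rw [Matrix.mul_assoc, green_mul_one_sub_subMatrix hdet, Matrix.mul_one]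
    rw [← h, Matrix.mul_sub, Matrix.mul_one, sub_add_cancel]
  exact congrFun₂ hE b a

theorem mul_le_boundaryKernel (hdet : IsUnit (1 - subMatrix P Bᶜ).det)
    (hP : ∀ x y, 0 ≤ P x y) (hG : ∀ a c, 0 ≤ green P Bᶜ a c) (b : B) (a : ↥Bᶜ) (z : X) :
    boundaryKernel P B b a * P a z ≤ boundaryKernel P B b z := by
  rw [boundaryKernel_apply_compl hdet]
  refine le_add_of_nonneg_of_le (hP b z) ?_
  exact Finset.single_le_sum (f := fun a => (subMatrix2 P B Bᶜ * green P Bᶜ) b a * P a z)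
    (fun a _ => mul_nonneg (subMatrix2_mul_green_nonneg hP hG b a) (hP _ _)) (Finset.mem_univ a)

theorem exists_reflTransGen_boundaryKernel_pos (hdet : IsUnit (1 - subMatrix P Bᶜ).det)
    (hP : ∀ x y, 0 ≤ P x y) (hG : ∀ a c, 0 ≤ green P Bᶜ a c) {x z : X} (hx : x ∈ B)
    (h : TransGen (fun x y => 0 < P x y) x z) :
    ∃ b : B, ReflTransGen (fun b b' : B => 0 < Qmat P B b b') ⟨x, hx⟩ b ∧
      0 < boundaryKernel P B b z := by
  induction h with
  | single hxz => exact ⟨⟨x, hx⟩, .refl, hxz.trans_le (le_boundaryKernel hP hG ⟨x, hx⟩ _)⟩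
  | @tail y z _ hyz ih =>
    obtain ⟨b, hxb, hby⟩ := ih
    by_cases hy : y ∈ B
    · refine ⟨⟨y, hy⟩, hxb.tail ?_, hyz.trans_le (le_boundaryKernel hP hG ⟨y, hy⟩ _)⟩
      rwa [Qmat_apply_eq_boundaryKernel]
    · exact ⟨b, hxb, (mul_pos hby hyz).trans_le
        (mul_le_boundaryKernel hdet hP hG b ⟨y, Finset.mem_compl.2 hy⟩ z)⟩

theorem Qmat_transGen (hdet : IsUnit (1 - subMatrix P Bᶜ).det) (hP : ∀ x y, 0 ≤ P x y)
    (hG : ∀ a c, 0 ≤ green P Bᶜ a c) (hconn : ∀ x y, TransGen (fun x y => 0 < P x y) x y)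
    (x y : B) : TransGen (fun b b' : B => 0 < Qmat P B b b') x y := by
  obtain ⟨b, hxb, hby⟩ := exists_reflTransGen_boundaryKernel_pos hdet hP hG x.2 (hconn x y)
  exact .tail' hxb (by rwa [Qmat_apply_eq_boundaryKernel])

end Irreducibility

theorem boundary_chain_stochastic_irreducible_stationary_general {X : Type*}
    [Fintype X] [DecidableEq X]
    (P : Matrix X X ℝ)
    (hnonneg : ∀ x y, 0 ≤ P x y)
    (hrow : ∀ x, ∑ y, P x y = 1)
    (hirr : ∀ x y, ∃ n, 1 ≤ n ∧ 0 < (P ^ n) x y)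
    (π : X → ℝ)
    (hπstat : ∀ y, ∑ x, π x * P x y = π y)
    (Bnd : Finset X) (hB : Bnd.Nonempty) :
    (∀ x y : ↥Bnd, 0 ≤ Qmat P Bnd x y) ∧
    (∀ x : ↥Bnd, ∑ y : ↥Bnd, Qmat P Bnd x y = 1) ∧
    (∀ x y : ↥Bnd, ∃ n, 1 ≤ n ∧ 0 < ((Qmat P Bnd) ^ n) x y) ∧
    (∀ y : ↥Bnd, ∑ x : ↥Bnd, π x.1 * Qmat P Bnd x y = π y.1) := by
  have hP : P ∈ rowStochastic ℝ X := mem_rowStochastic_iff_sum.2 ⟨hnonneg, hrow⟩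
  have hconn : ∀ x y, TransGen (fun x y => 0 < P x y) x y := fun x y =>
    (transGen_iff_exists_pow_apply_pos hnonneg).2 (hirr x y)
  have hdet := isUnit_det_one_sub_subMatrix_compl hP hconn hB
  have hG := green_compl_nonneg hP hconn hB
  have hQ := Qmat_nonneg hnonneg hG
  refine ⟨hQ, fun x => ?_, fun x y => ?_, fun y => ?_⟩
  · simpa [mulVec, dotProduct] using
      congrFun (Qmat_mulVec_of_mulVec_eq hdet (one_vecMul_of_mem_rowStochastic hP)) x
  · exact (transGen_iff_exists_pow_apply_pos hQ).1 (Qmat_transGen hdet hnonneg hG hconn x y)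
  · exact congrFun (vecMul_Qmat_of_vecMul_eq hdet (funext hπstat)) y

/-- The boundary transition matrix `Q` is stochastic and
irreducible, and the restriction of `π` to `∂X` is stationary for `Q`. -/
theorem boundary_chain_stochastic_irreducible_stationary {X : Type*}
    [Fintype X] [DecidableEq X]
    (P : Matrix X X ℝ)
    (hcard : 1 < Fintype.card X)
    (hnonneg : ∀ x y, 0 ≤ P x y)
    (hrow : ∀ x, ∑ y, P x y = 1)
    (hirr : ∀ x y, ∃ n, 1 ≤ n ∧ 0 < (P ^ n) x y)
    (π : X → ℝ)
    (hπstat : ∀ y, ∑ x, π x * P x y = π y)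
    (hπpos : ∀ x, 0 < π x) (hπsum : ∑ x, π x = 1)
    (Bnd : Finset X) (hB : Bnd.Nonempty) (hB' : Bnd ≠ Finset.univ) :
    (∀ x y : ↥Bnd, 0 ≤ Qmat P Bnd x y) ∧
    (∀ x : ↥Bnd, ∑ y : ↥Bnd, Qmat P Bnd x y = 1) ∧
    (∀ x y : ↥Bnd, ∃ n, 1 ≤ n ∧ 0 < ((Qmat P Bnd) ^ n) x y) ∧
    (∀ y : ↥Bnd, ∑ x : ↥Bnd, π x.1 * Qmat P Bnd x y = π y.1) :=
  boundary_chain_stochastic_irreducible_stationary_general P hnonneg hrow hirr π hπstat Bnd hB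
end

section
/- Let f ∈ L(X°) and g₁, g₂ ∈ L(∂X). The plate problem Δ²u = f on X°, ∂_n u = g₁ on ∂X, and u = g₂ on ∂X admits a solution u ∈ L(X) if and only if (Q − I_{∂X}) g₂ + P_{∂X,X°} G_{X°}² f = −(I_{∂X} + R) g₁, where Q = P_{∂X} + P_{∂X,X°} G_{X°} P_{X°,∂X} and R = P_{∂X,X°} G_{X°}² P_{X°,∂X}. In that case the unique solution is u = G_{X°}² f + G_{X°} h₁ + h₂, where h_i ∈ L(X) is given by h_i(x) = ∫_{∂X} g_i dν_x (i = 1,2), and G_{X°} is regarded as an X×X matrix with zero entries outside X°×X°. -/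
open Matrix Finset

/-- `G_A` regarded as an `X × X` matrix with zero entries outside `A × A`. -/
noncomputable def greenExt {X : Type*} [DecidableEq X] (P : Matrix X X ℝ) (A : Finset X) :
    Matrix X X ℝ :=
  Matrix.of fun x y =>
    if hx : x ∈ A then (if hy : y ∈ A then green P A ⟨x, hx⟩ ⟨y, hy⟩ else 0) else 0

/-- A real matrix acting on complex functions. -/
noncomputable def mulVecC {m n : Type*} [Fintype n] (M : Matrix m n ℝ) (f : n → ℂ) (x : m) : ℂ :=
  ∑ y, (M x y : ℂ) * f y

/-- The hitting distributions `ν_x` on the boundary `B` (interior `A`). -/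
noncomputable def nuGen {X : Type*} [DecidableEq X] (P : Matrix X X ℝ) (A B : Finset X)
    (x y : X) : ℝ :=
  if x ∈ B then (if x = y then 1 else 0)
  else if hx : x ∈ A then
    (if y ∈ B then ∑ w : A, green P A ⟨x, hx⟩ w * P w.1 y else 0)
  else 0

/-- The matrix `R = P_{∂X,X°} G_{X°}² P_{X°,∂X}`. -/
noncomputable def Rmat {X : Type*} [Fintype X] [DecidableEq X] (P : Matrix X X ℝ)
    (Bnd : Finset X) : Matrix ↥Bnd ↥Bnd ℝ :=
  subMatrix2 P Bnd Bndᶜ * (green P Bndᶜ) ^ 2 * subMatrix2 P Bndᶜ Bnd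

lemma pow_entry_nonneg {X : Type*} [Fintype X] [DecidableEq X] (P : Matrix X X ℝ)
    (hnonneg : ∀ x y, 0 ≤ P x y) : ∀ (n : ℕ) (x y : X), 0 ≤ (P ^ n) x y := by
  intro n
  induction n with
  | zero =>
    intro x y
    classical
    rw [pow_zero]
    by_cases h : x = y <;> simp [Matrix.one_apply, h]
  | succ n ih =>
    intro x y
    rw [pow_succ, Matrix.mul_apply]
    exact Finset.sum_nonneg fun z _ => mul_nonneg (ih x z) (hnonneg z y)

lemma step_lemma {X : Type*} [Fintype X] [DecidableEq X] (P : Matrix X X ℝ)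
    (hnonneg : ∀ x y, 0 ≤ P x y) (hrow : ∀ x, ∑ y, P x y = 1) (Bnd : Finset X)
    (v : ↥Bndᶜ → ℝ) (hv : ∀ x : ↥Bndᶜ, v x = ∑ z : ↥Bndᶜ, P x.1 z.1 * v z)
    (M : ℝ) (hM : 0 < M) (hMmax : ∀ z : ↥Bndᶜ, |v z| ≤ M)
    (x : X) (hx : x ∈ Bndᶜ) (hxM : |v ⟨x, hx⟩| = M)
    (y : X) (hy : 0 < P x y) : ∃ hy' : y ∈ Bndᶜ, |v ⟨y, hy'⟩| = M := by
  have h2 : ∀ z : ↥Bndᶜ, P x z.1 * |v z| ≤ P x z.1 * M :=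
    fun z => mul_le_mul_of_nonneg_left (hMmax z) (hnonneg _ _)
  have hs : ∑ z : ↥Bndᶜ, P x z.1 ≤ 1 := by
    rw [← hrow x, Finset.sum_coe_sort]
    exact Finset.sum_le_sum_of_subset_of_nonneg (Finset.subset_univ _)
      (fun i _ _ => hnonneg x i)
  have h1 : M ≤ ∑ z : ↥Bndᶜ, P x z.1 * |v z| := by
    calc M = |v ⟨x, hx⟩| := hxM.symm
      _ = |∑ z : ↥Bndᶜ, P x z.1 * v z| := by rw [hv]
      _ ≤ ∑ z : ↥Bndᶜ, |P x z.1 * v z| := Finset.abs_sum_le_sum_abs _ _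
      _ = ∑ z : ↥Bndᶜ, P x z.1 * |v z| := by
          refine Finset.sum_congr rfl fun z _ => ?_
          rw [abs_mul, abs_of_nonneg (hnonneg _ _)]
  have h3 : ∑ z : ↥Bndᶜ, P x z.1 * M ≤ M := by
    rw [← Finset.sum_mul]
    nlinarith
  have heq1 : ∑ z : ↥Bndᶜ, P x z.1 * |v z| = ∑ z : ↥Bndᶜ, P x z.1 * M := by
    have hle := Finset.sum_le_sum (fun z (_ : z ∈ Finset.univ) => h2 z)
    linarith
  have hsum1 : ∑ z : ↥Bndᶜ, P x z.1 = 1 := by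
    have hEq : (∑ z : ↥Bndᶜ, P x z.1) * M = M := by
      rw [Finset.sum_mul]
      nlinarith [h1, heq1, h3]
    have := mul_right_cancel₀ (ne_of_gt hM) (by rw [hEq, one_mul] : (∑ z : ↥Bndᶜ, P x z.1) * M = 1 * M)
    exact this
  have hbzero : ∀ z ∈ Bnd, P x z = 0 := by
    have hsplit := Finset.sum_add_sum_compl Bnd (fun z => P x z)
    have h4 : ∑ z ∈ Bndᶜ, P x z = 1 := by rw [← Finset.sum_coe_sort]; exact hsum1
    have h5 : ∑ z ∈ Bnd, P x z = 0 := by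
      have := hrow x
      linarith
    exact (Finset.sum_eq_zero_iff_of_nonneg (fun i _ => hnonneg x i)).1 h5
  have hy' : y ∈ Bndᶜ := by
    rw [Finset.mem_compl]
    intro hyB
    have := hbzero y hyB
    linarith
  refine ⟨hy', ?_⟩
  have := (Finset.sum_eq_sum_iff_of_le (fun z (_ : z ∈ Finset.univ) => h2 z)).1 heq1
    ⟨y, hy'⟩ (Finset.mem_univ _)
  exact mul_left_cancel₀ (ne_of_gt hy) this

lemma kernel_lemma {X : Type*} [Fintype X] [DecidableEq X] (P : Matrix X X ℝ)
    (hnonneg : ∀ x y, 0 ≤ P x y) (hrow : ∀ x, ∑ y, P x y = 1)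
    (hirr : ∀ x y, ∃ n, 1 ≤ n ∧ 0 < (P ^ n) x y)
    (Bnd : Finset X) (hB : Bnd.Nonempty)
    (v : ↥Bndᶜ → ℝ) (hv0 : (1 - subMatrix P Bndᶜ) *ᵥ v = 0) : v = 0 := by
  have hv : ∀ x : ↥Bndᶜ, v x = ∑ z : ↥Bndᶜ, P x.1 z.1 * v z := by
    intro x
    have h := congrFun hv0 x
    rw [Matrix.sub_mulVec, Matrix.one_mulVec] at h
    have h' : v x - (subMatrix P Bndᶜ *ᵥ v) x = 0 := h
    have : (subMatrix P Bndᶜ *ᵥ v) x = ∑ z : ↥Bndᶜ, P x.1 z.1 * v z := by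
      simp [Matrix.mulVec, dotProduct, subMatrix]
    linarith [this ▸ h']
  by_cases hA : Nonempty ↥Bndᶜ
  · obtain ⟨x₀, hx₀⟩ := Finite.exists_max (fun z : ↥Bndᶜ => |v z|)
    set M := |v x₀| with hMdef
    rcases eq_or_lt_of_le (abs_nonneg (v x₀)) with hM0 | hM
    · funext z
      have h1 := hx₀ z
      have h2 : |v z| ≤ 0 := by rw [hMdef, ← hM0] at h1; exact h1
      simpa using abs_nonpos_iff.1 h2
    · exfalso
      have key : ∀ n (x : X) (hx : x ∈ Bndᶜ), |v ⟨x, hx⟩| = M →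
          ∀ y, 0 < (P ^ (n + 1)) x y → ∃ hy : y ∈ Bndᶜ, |v ⟨y, hy⟩| = M := by
        intro n
        induction n with
        | zero =>
          intro x hx hxM y hy
          rw [pow_one] at hy
          exact step_lemma P hnonneg hrow Bnd v hv M hM hx₀ x hx hxM y hy
        | succ n ih =>
          intro x hx hxM y hy
          rw [pow_succ', Matrix.mul_apply] at hy
          have hz : ∃ z, 0 < P x z * (P ^ (n + 1)) z y := by
            by_contra h
            push_neg at h
            have : ∑ z, P x z * (P ^ (n + 1)) z y ≤ 0 :=
              Finset.sum_nonpos fun z _ => h z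
            linarith
          obtain ⟨z, hz⟩ := hz
          rcases mul_pos_iff.1 hz with ⟨hz1, hz2⟩ | ⟨hz1, _⟩
          · obtain ⟨hz', hzM⟩ := step_lemma P hnonneg hrow Bnd v hv M hM hx₀ x hx hxM z hz1
            exact ih z hz' hzM y hz2
          · exact absurd hz1 (not_lt.2 (hnonneg x z))
      obtain ⟨b, hb⟩ := hB
      obtain ⟨n, hn1, hpos⟩ := hirr x₀.1 b
      obtain ⟨m, rfl⟩ : ∃ m, n = m + 1 := ⟨n - 1, by omega⟩
      obtain ⟨hb', _⟩ := key m x₀.1 x₀.2 (by rw [hMdef]) b hpos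
      exact (Finset.mem_compl.1 hb') hb
  · funext z
    exact absurd ⟨z⟩ hA

lemma green_det_isUnit {X : Type*} [Fintype X] [DecidableEq X] (P : Matrix X X ℝ)
    (hnonneg : ∀ x y, 0 ≤ P x y) (hrow : ∀ x, ∑ y, P x y = 1)
    (hirr : ∀ x y, ∃ n, 1 ≤ n ∧ 0 < (P ^ n) x y)
    (Bnd : Finset X) (hB : Bnd.Nonempty) :
    IsUnit (1 - subMatrix P Bndᶜ).det := by
  rw [isUnit_iff_ne_zero]
  intro h
  obtain ⟨w, hw0, hw⟩ := Matrix.exists_mulVec_eq_zero_iff.2 h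
  exact hw0 (kernel_lemma P hnonneg hrow hirr Bnd hB w hw)

section Helpers
variable {X : Type*} [Fintype X] [DecidableEq X]

/-- restriction of a function to a finset -/
def restr (A : Finset X) (F : X → ℂ) : ↥A → ℂ := fun z => F z.1

noncomputable def cPAc (P : Matrix X X ℝ) (Bnd : Finset X) : Matrix ↥Bndᶜ ↥Bndᶜ ℂ :=
  (subMatrix P Bndᶜ).map Complex.ofReal
noncomputable def cPBc (P : Matrix X X ℝ) (Bnd : Finset X) : Matrix ↥Bnd ↥Bnd ℂ :=
  (subMatrix P Bnd).map Complex.ofReal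
noncomputable def cPABc (P : Matrix X X ℝ) (Bnd : Finset X) : Matrix ↥Bndᶜ ↥Bnd ℂ :=
  (subMatrix2 P Bndᶜ Bnd).map Complex.ofReal
noncomputable def cPBAc (P : Matrix X X ℝ) (Bnd : Finset X) : Matrix ↥Bnd ↥Bndᶜ ℂ :=
  (subMatrix2 P Bnd Bndᶜ).map Complex.ofReal
noncomputable def cGc (P : Matrix X X ℝ) (Bnd : Finset X) : Matrix ↥Bndᶜ ↥Bndᶜ ℂ :=
  (green P Bndᶜ).map Complex.ofReal

lemma mulVecC_eq {m n : Type*} [Fintype n] (M : Matrix m n ℝ) (g : n → ℂ) :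
    mulVecC M g = (M.map Complex.ofReal) *ᵥ g := by
  funext x
  simp [mulVecC, Matrix.mulVec, dotProduct, Matrix.map_apply]

lemma greenExt_zero_col (P : Matrix X X ℝ) (Bnd : Finset X) {a b : X} (hb : b ∉ Bndᶜ) :
    greenExt P Bndᶜ a b = 0 := by
  by_cases ha : a ∈ Bndᶜ
  · simp only [greenExt, Matrix.of_apply, dif_pos ha, dif_neg hb]
  · simp only [greenExt, Matrix.of_apply, dif_neg ha]

lemma lap_split_int (P : Matrix X X ℝ) (Bnd : Finset X) (u : X → ℂ) (z : ↥Bndᶜ) :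
    lap P u z.1 =
      (cPAc P Bnd *ᵥ restr Bndᶜ u + cPABc P Bnd *ᵥ restr Bnd u) z - u z.1 := by
  have e1 : (cPAc P Bnd *ᵥ restr Bndᶜ u) z = ∑ y : ↥Bndᶜ, (P z.1 y.1 : ℂ) * u y.1 := by
    simp [cPAc, Matrix.mulVec, dotProduct, subMatrix, Matrix.map_apply, restr]
  have e2 : (cPABc P Bnd *ᵥ restr Bnd u) z = ∑ y : ↥Bnd, (P z.1 y.1 : ℂ) * u y.1 := by
    simp [cPABc, Matrix.mulVec, dotProduct, subMatrix2, Matrix.map_apply, restr]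
  simp only [lap, Pi.add_apply, e1, e2]
  congr 1
  rw [Finset.sum_coe_sort Bnd (fun y => (P z.1 y : ℂ) * u y),
    Finset.sum_coe_sort Bndᶜ (fun y => (P z.1 y : ℂ) * u y),
    add_comm, Finset.sum_add_sum_compl]

lemma lap_split_bnd (P : Matrix X X ℝ) (Bnd : Finset X) (u : X → ℂ) (z : ↥Bnd) :
    lap P u z.1 =
      (cPBAc P Bnd *ᵥ restr Bndᶜ u + cPBc P Bnd *ᵥ restr Bnd u) z - u z.1 := by
  have e1 : (cPBAc P Bnd *ᵥ restr Bndᶜ u) z = ∑ y : ↥Bndᶜ, (P z.1 y.1 : ℂ) * u y.1 := by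
    simp [cPBAc, Matrix.mulVec, dotProduct, subMatrix2, Matrix.map_apply, restr]
  have e2 : (cPBc P Bnd *ᵥ restr Bnd u) z = ∑ y : ↥Bnd, (P z.1 y.1 : ℂ) * u y.1 := by
    simp [cPBc, Matrix.mulVec, dotProduct, subMatrix, Matrix.map_apply, restr]
  simp only [lap, Pi.add_apply, e1, e2]
  congr 1
  rw [Finset.sum_coe_sort Bnd (fun y => (P z.1 y : ℂ) * u y),
    Finset.sum_coe_sort Bndᶜ (fun y => (P z.1 y : ℂ) * u y),
    add_comm, Finset.sum_add_sum_compl]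

lemma greenExt_bnd (P : Matrix X X ℝ) (Bnd : Finset X) (F : X → ℂ) (x : X) (hx : x ∈ Bnd) :
    mulVecC (greenExt P Bndᶜ) F x = 0 := by
  have hx' : x ∉ Bndᶜ := by simp [Finset.mem_compl, hx]
  rw [mulVecC]
  apply Finset.sum_eq_zero
  intro y _
  simp only [greenExt, Matrix.of_apply, dif_neg hx']
  simp

lemma greenExt_int (P : Matrix X X ℝ) (Bnd : Finset X) (F : X → ℂ) (x : X) (hx : x ∈ Bndᶜ) :
    mulVecC (greenExt P Bndᶜ) F x = (cGc P Bnd *ᵥ restr Bndᶜ F) ⟨x, hx⟩ := by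
  have h1 : ∑ y, ((greenExt P Bndᶜ) x y : ℂ) * F y
      = ∑ y ∈ Bndᶜ, ((greenExt P Bndᶜ) x y : ℂ) * F y := by
    symm
    apply Finset.sum_subset (Finset.subset_univ _)
    intro y _ hy
    rw [greenExt_zero_col P Bnd hy]
    simp
  have e : (cGc P Bnd *ᵥ restr Bndᶜ F) ⟨x, hx⟩
      = ∑ y : ↥Bndᶜ, (green P Bndᶜ ⟨x, hx⟩ y : ℂ) * F y.1 := by
    simp [cGc, Matrix.mulVec, dotProduct, Matrix.map_apply, restr]
  rw [mulVecC, h1, ← Finset.sum_coe_sort, e]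
  refine Finset.sum_congr rfl fun y _ => ?_
  congr 2
  simp only [greenExt, Matrix.of_apply, dif_pos hx, dif_pos y.2]

lemma nu_bnd (P : Matrix X X ℝ) (Bnd : Finset X) (g : X → ℂ) (x : X) (hx : x ∈ Bnd) :
    ∑ y ∈ Bnd, (nuGen P Bndᶜ Bnd x y : ℂ) * g y = g x := by
  simp only [nuGen, if_pos hx]
  have h : ∀ y ∈ Bnd, (((if x = y then (1:ℝ) else 0) : ℝ) : ℂ) * g y
      = if x = y then g y else 0 := by
    intro y _
    split <;> simp
  rw [Finset.sum_congr rfl h, Finset.sum_ite_eq Bnd x g, if_pos hx]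

lemma nu_int (P : Matrix X X ℝ) (Bnd : Finset X) (g : X → ℂ) (x : X) (hx : x ∈ Bndᶜ) :
    ∑ y ∈ Bnd, (nuGen P Bndᶜ Bnd x y : ℂ) * g y
      = (cGc P Bnd *ᵥ (cPABc P Bnd *ᵥ restr Bnd g)) ⟨x, hx⟩ := by
  have hxB : x ∉ Bnd := Finset.mem_compl.1 hx
  rw [← Finset.sum_coe_sort]
  have h1 : ∀ y : ↥Bnd, (nuGen P Bndᶜ Bnd x y.1 : ℂ) * g y.1
      = ∑ w : ↥Bndᶜ, (green P Bndᶜ ⟨x, hx⟩ w : ℂ) * ((P w.1 y.1 : ℂ) * g y.1) := by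
    intro y
    simp only [nuGen, if_neg hxB, dif_pos hx, if_pos y.2]
    push_cast
    rw [Finset.sum_mul]
    exact Finset.sum_congr rfl fun w _ => by ring
  rw [Finset.sum_congr rfl (fun y _ => h1 y), Finset.sum_comm]
  have e : (cGc P Bnd *ᵥ (cPABc P Bnd *ᵥ restr Bnd g)) ⟨x, hx⟩
      = ∑ w : ↥Bndᶜ, (green P Bndᶜ ⟨x, hx⟩ w : ℂ) * ∑ y : ↥Bnd, (P w.1 y.1 : ℂ) * g y.1 := by
    simp [cGc, cPABc, Matrix.mulVec, dotProduct, subMatrix2, Matrix.map_apply, restr]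
  rw [e]
  exact Finset.sum_congr rfl fun w _ => by rw [Finset.mul_sum]

lemma green_complex (P : Matrix X X ℝ) (Bnd : Finset X)
    (h1 : (1 - subMatrix P Bndᶜ) * green P Bndᶜ = 1)
    (h2 : green P Bndᶜ * (1 - subMatrix P Bndᶜ) = 1) :
    (1 - cPAc P Bnd) * cGc P Bnd = 1 ∧ cGc P Bnd * (1 - cPAc P Bnd) = 1 := by
  constructor
  · have h := congrArg (Complex.ofRealHom.mapMatrix) h1
    rw [_root_.map_mul, _root_.map_one, _root_.map_sub, _root_.map_one] at h
    exact h
  · have h := congrArg (Complex.ofRealHom.mapMatrix) h2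
    rw [_root_.map_mul, _root_.map_one, _root_.map_sub, _root_.map_one] at h
    exact h

end Helpers

section Maps
variable {X : Type*} [Fintype X] [DecidableEq X]

lemma map_Qsub (P : Matrix X X ℝ) (Bnd : Finset X) :
    (Qmat P Bnd - 1).map Complex.ofReal
      = cPBc P Bnd + cPBAc P Bnd * cGc P Bnd * cPABc P Bnd - 1 := by
  ext x y
  simp only [Qmat, cPBc, cPBAc, cGc, cPABc, Matrix.map_apply, Matrix.sub_apply,
    Matrix.add_apply, Matrix.mul_apply, Matrix.one_apply, subMatrix, subMatrix2,
    Matrix.of_apply]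
  split_ifs <;> push_cast <;> ring

lemma map_BG2 (P : Matrix X X ℝ) (Bnd : Finset X) :
    (subMatrix2 P Bnd Bndᶜ * (green P Bndᶜ) ^ 2).map Complex.ofReal
      = cPBAc P Bnd * (cGc P Bnd * cGc P Bnd) := by
  rw [sq]
  ext x y
  simp only [cPBAc, cGc, Matrix.map_apply, Matrix.mul_apply, subMatrix2, Matrix.of_apply]
  push_cast
  ring

lemma map_oneR (P : Matrix X X ℝ) (Bnd : Finset X) :
    (1 + Rmat P Bnd).map Complex.ofReal
      = 1 + cPBAc P Bnd * (cGc P Bnd * cGc P Bnd) * cPABc P Bnd := by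
  rw [Rmat, sq]
  ext x y
  simp only [cPBAc, cGc, cPABc, Matrix.map_apply, Matrix.add_apply, Matrix.mul_apply,
    Matrix.one_apply, subMatrix2, Matrix.of_apply]
  split_ifs <;> push_cast <;> ring

end Maps
section Char
variable {X : Type*} [Fintype X] [DecidableEq X]

noncomputable def uStarD (P : Matrix X X ℝ) (Bnd : Finset X) (f g₁ g₂ : X → ℂ) : ↥Bndᶜ → ℂ :=
  cGc P Bnd *ᵥ (cGc P Bnd *ᵥ restr Bndᶜ f) +
    cGc P Bnd *ᵥ (cGc P Bnd *ᵥ (cPABc P Bnd *ᵥ restr Bnd g₁)) +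
    cGc P Bnd *ᵥ (cPABc P Bnd *ᵥ restr Bnd g₂)

lemma char_lemma (P : Matrix X X ℝ) (Bnd : Finset X) (f g₁ g₂ : X → ℂ)
    (hg1 : (1 - cPAc P Bnd) * cGc P Bnd = 1) (hg2 : cGc P Bnd * (1 - cPAc P Bnd) = 1)
    (u : X → ℂ) :
    ((∀ x, x ∉ Bnd → lap P (lap P u) x = f x) ∧
        (∀ x ∈ Bnd, -lap P u x = g₁ x) ∧ (∀ x ∈ Bnd, u x = g₂ x)) ↔
      (restr Bnd u = restr Bnd g₂ ∧ restr Bndᶜ u = uStarD P Bnd f g₁ g₂ ∧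
        cPBAc P Bnd *ᵥ uStarD P Bnd f g₁ g₂ + cPBc P Bnd *ᵥ restr Bnd g₂ - restr Bnd g₂
          = -(restr Bnd g₁)) := by
  have hcan1 : ∀ t : ↥Bndᶜ → ℂ, (1 - cPAc P Bnd) *ᵥ (cGc P Bnd *ᵥ t) = t := fun t => by
    rw [Matrix.mulVec_mulVec, hg1, Matrix.one_mulVec]
  have hcan2 : ∀ t : ↥Bndᶜ → ℂ, cGc P Bnd *ᵥ ((1 - cPAc P Bnd) *ᵥ t) = t := fun t => by
    rw [Matrix.mulVec_mulVec, hg2, Matrix.one_mulVec]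
  have hLA : restr Bndᶜ (lap P u)
      = cPAc P Bnd *ᵥ restr Bndᶜ u + cPABc P Bnd *ᵥ restr Bnd u - restr Bndᶜ u := by
    funext z
    have h2 := lap_split_int P Bnd u z
    simp only [Pi.add_apply] at h2
    show lap P u z.1 = (cPAc P Bnd *ᵥ restr Bndᶜ u) z + (cPABc P Bnd *ᵥ restr Bnd u) z
      - u z.1
    exact h2
  have hLB : restr Bnd (lap P u)
      = cPBAc P Bnd *ᵥ restr Bndᶜ u + cPBc P Bnd *ᵥ restr Bnd u - restr Bnd u := by
    funext z
    have h2 := lap_split_bnd P Bnd u z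
    simp only [Pi.add_apply] at h2
    show lap P u z.1 = (cPBAc P Bnd *ᵥ restr Bndᶜ u) z + (cPBc P Bnd *ᵥ restr Bnd u) z
      - u z.1
    exact h2
  have hLL : restr Bndᶜ (lap P (lap P u))
      = cPAc P Bnd *ᵥ restr Bndᶜ (lap P u) + cPABc P Bnd *ᵥ restr Bnd (lap P u)
        - restr Bndᶜ (lap P u) := by
    funext z
    have h2 := lap_split_int P Bnd (lap P u) z
    simp only [Pi.add_apply] at h2
    show lap P (lap P u) z.1 = (cPAc P Bnd *ᵥ restr Bndᶜ (lap P u)) z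
      + (cPABc P Bnd *ᵥ restr Bnd (lap P u)) z - lap P u z.1
    exact h2
  have hU : (1 - cPAc P Bnd) *ᵥ uStarD P Bnd f g₁ g₂
      = cGc P Bnd *ᵥ restr Bndᶜ f + cGc P Bnd *ᵥ (cPABc P Bnd *ᵥ restr Bnd g₁)
        + cPABc P Bnd *ᵥ restr Bnd g₂ := by
    rw [uStarD]
    simp only [Matrix.mulVec_add, hcan1]
  constructor
  · rintro ⟨c1, c2, c3⟩
    have huB : restr Bnd u = restr Bnd g₂ := funext fun z => c3 z.1 z.2
    have hC2 : restr Bnd (lap P u) = -(restr Bnd g₁) := by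
      funext z
      have h := c2 z.1 z.2
      show lap P u z.1 = -(g₁ z.1)
      linear_combination -h
    have hC1 : restr Bndᶜ (lap P (lap P u)) = restr Bndᶜ f := by
      funext z
      exact c1 z.1 (Finset.mem_compl.1 z.2)
    have hEq := hLL.symm.trans hC1
    rw [hLA, hC2, huB] at hEq
    set w := cPAc P Bnd *ᵥ restr Bndᶜ u + cPABc P Bnd *ᵥ restr Bnd g₂ - restr Bndᶜ u
      with hw
    have e1 : (1 - cPAc P Bnd) *ᵥ w = -(restr Bndᶜ f + cPABc P Bnd *ᵥ restr Bnd g₁) := by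
      rw [Matrix.sub_mulVec, Matrix.one_mulVec]
      rw [Matrix.mulVec_neg] at hEq
      linear_combination -hEq
    have e2 : w = -(cGc P Bnd *ᵥ (restr Bndᶜ f + cPABc P Bnd *ᵥ restr Bnd g₁)) := by
      have h := congrArg (fun t => cGc P Bnd *ᵥ t) e1
      rw [hcan2, Matrix.mulVec_neg] at h
      exact h
    have e3 : (1 - cPAc P Bnd) *ᵥ restr Bndᶜ u
        = cGc P Bnd *ᵥ (restr Bndᶜ f + cPABc P Bnd *ᵥ restr Bnd g₁)
          + cPABc P Bnd *ᵥ restr Bnd g₂ := by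
      rw [Matrix.sub_mulVec, Matrix.one_mulVec]
      linear_combination hw - e2
    have e4 : restr Bndᶜ u = uStarD P Bnd f g₁ g₂ := by
      have h := congrArg (fun t => cGc P Bnd *ᵥ t) e3
      rw [hcan2] at h
      rw [h, uStarD]
      simp only [Matrix.mulVec_add]
      try abel
    refine ⟨huB, e4, ?_⟩
    have hwB := hLB.symm.trans hC2
    rw [← e4, ← huB]
    exact hwB
  · rintro ⟨huB, huA, hcomp⟩
    have hLB2 : restr Bnd (lap P u) = -(restr Bnd g₁) := by
      rw [hLB, huA, huB]
      exact hcomp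
    have hLA2 : restr Bndᶜ (lap P u)
        = -(cGc P Bnd *ᵥ restr Bndᶜ f + cGc P Bnd *ᵥ (cPABc P Bnd *ᵥ restr Bnd g₁)) := by
      rw [hLA, huA, huB]
      have h := hU
      rw [Matrix.sub_mulVec, Matrix.one_mulVec] at h
      linear_combination -h
    have hLL2 : restr Bndᶜ (lap P (lap P u)) = restr Bndᶜ f := by
      rw [hLL, hLA2, hLB2]
      have hx1 : (1 - cPAc P Bnd) *ᵥ (cGc P Bnd *ᵥ restr Bndᶜ f
          + cGc P Bnd *ᵥ (cPABc P Bnd *ᵥ restr Bnd g₁))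
          = restr Bndᶜ f + cPABc P Bnd *ᵥ restr Bnd g₁ := by
        rw [← Matrix.mulVec_add, hcan1]
      rw [Matrix.sub_mulVec, Matrix.one_mulVec] at hx1
      simp only [Matrix.mulVec_neg]
      linear_combination hx1
    refine ⟨?_, ?_, ?_⟩
    · intro x hx
      exact congrFun hLL2 ⟨x, Finset.mem_compl.2 hx⟩
    · intro x hx
      have h : lap P u x = -(g₁ x) := congrFun hLB2 ⟨x, hx⟩
      rw [h, neg_neg]
    · intro x hx
      exact congrFun huB ⟨x, hx⟩

end Char
section Key
variable {X : Type*} [Fintype X] [DecidableEq X]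

lemma key_lemma (P : Matrix X X ℝ) (Bnd : Finset X) (f g₁ g₂ : X → ℂ) (x : ↥Bnd) :
    mulVecC (Qmat P Bnd - 1) (fun y : ↥Bnd => g₂ y.1) x +
        mulVecC (subMatrix2 P Bnd Bndᶜ * (green P Bndᶜ) ^ 2) (fun y : ↥Bndᶜ => f y.1) x +
        mulVecC (1 + Rmat P Bnd) (fun y : ↥Bnd => g₁ y.1) x
      = (cPBAc P Bnd *ᵥ uStarD P Bnd f g₁ g₂ + cPBc P Bnd *ᵥ restr Bnd g₂
          - restr Bnd g₂) x + restr Bnd g₁ x := by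
  rw [show (fun y : ↥Bnd => g₂ y.1) = restr Bnd g₂ from rfl,
    show (fun y : ↥Bnd => g₁ y.1) = restr Bnd g₁ from rfl,
    show (fun y : ↥Bndᶜ => f y.1) = restr Bndᶜ f from rfl,
    mulVecC_eq, mulVecC_eq, mulVecC_eq, map_Qsub, map_BG2, map_oneR]
  simp only [uStarD, Matrix.sub_mulVec, Matrix.add_mulVec, Matrix.one_mulVec,
    ← Matrix.mulVec_mulVec, Matrix.mulVec_add, Pi.add_apply, Pi.sub_apply]
  ring

end Key

/-- The plate problem `Δ²u = f` on `X°`, `∂ₙu = g₁` and `u = g₂` on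
`∂X` is solvable iff `(Q − I)g₂ + P_{∂X,X°}G_{X°}²f = −(I + R)g₁`; in that case the
unique solution is `u = G_{X°}²f + G_{X°}h₁ + h₂`, `hᵢ(x) = ∫_{∂X} gᵢ dν_x`. -/
theorem plate_equation_variant1 {X : Type*} [Fintype X] [DecidableEq X]
    (P : Matrix X X ℝ)
    (hcard : 1 < Fintype.card X)
    (hnonneg : ∀ x y, 0 ≤ P x y)
    (hrow : ∀ x, ∑ y, P x y = 1)
    (hirr : ∀ x y, ∃ n, 1 ≤ n ∧ 0 < (P ^ n) x y)
    (Bnd : Finset X) (hB : Bnd.Nonempty) (hB' : Bnd ≠ Finset.univ)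
    (f g₁ g₂ : X → ℂ) :
    ((∃ u : X → ℂ,
        (∀ x, x ∉ Bnd → lap P (lap P u) x = f x) ∧
          (∀ x ∈ Bnd, -lap P u x = g₁ x) ∧ (∀ x ∈ Bnd, u x = g₂ x)) ↔
      (∀ x : ↥Bnd,
        mulVecC (Qmat P Bnd - 1) (fun y : ↥Bnd => g₂ y.1) x +
          mulVecC (subMatrix2 P Bnd Bndᶜ * (green P Bndᶜ) ^ 2) (fun y : ↥Bndᶜ => f y.1) x =
        -mulVecC (1 + Rmat P Bnd) (fun y : ↥Bnd => g₁ y.1) x)) ∧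
    ((∀ x : ↥Bnd,
        mulVecC (Qmat P Bnd - 1) (fun y : ↥Bnd => g₂ y.1) x +
          mulVecC (subMatrix2 P Bnd Bndᶜ * (green P Bndᶜ) ^ 2) (fun y : ↥Bndᶜ => f y.1) x =
        -mulVecC (1 + Rmat P Bnd) (fun y : ↥Bnd => g₁ y.1) x) →
      ∃! u : X → ℂ,
        (∀ x, x ∉ Bnd → lap P (lap P u) x = f x) ∧
          (∀ x ∈ Bnd, -lap P u x = g₁ x) ∧ (∀ x ∈ Bnd, u x = g₂ x)) ∧
    (∀ u : X → ℂ,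
      ((∀ x, x ∉ Bnd → lap P (lap P u) x = f x) ∧
        (∀ x ∈ Bnd, -lap P u x = g₁ x) ∧ (∀ x ∈ Bnd, u x = g₂ x)) →
      ∀ x, u x =
        mulVecC (greenExt P Bndᶜ) (mulVecC (greenExt P Bndᶜ) f) x +
          mulVecC (greenExt P Bndᶜ)
            (fun z => ∑ y ∈ Bnd, (nuGen P Bndᶜ Bnd z y : ℂ) * g₁ y) x +
          ∑ y ∈ Bnd, (nuGen P Bndᶜ Bnd x y : ℂ) * g₂ y) := by
  classical
  have hdet := green_det_isUnit P hnonneg hrow hirr Bnd hB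
  have hR1 : (1 - subMatrix P Bndᶜ) * green P Bndᶜ = 1 := Matrix.mul_nonsing_inv _ hdet
  have hR2 : green P Bndᶜ * (1 - subMatrix P Bndᶜ) = 1 := Matrix.nonsing_inv_mul _ hdet
  obtain ⟨hg1, hg2⟩ := green_complex P Bnd hR1 hR2
  have char := char_lemma P Bnd f g₁ g₂ hg1 hg2
  have hcompat :
      (∀ x : ↥Bnd,
        mulVecC (Qmat P Bnd - 1) (fun y : ↥Bnd => g₂ y.1) x +
          mulVecC (subMatrix2 P Bnd Bndᶜ * (green P Bndᶜ) ^ 2) (fun y : ↥Bndᶜ => f y.1) x =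
        -mulVecC (1 + Rmat P Bnd) (fun y : ↥Bnd => g₁ y.1) x) ↔
      (cPBAc P Bnd *ᵥ uStarD P Bnd f g₁ g₂ + cPBc P Bnd *ᵥ restr Bnd g₂ - restr Bnd g₂
        = -(restr Bnd g₁)) := by
    constructor
    · intro h
      funext z
      have hk := key_lemma P Bnd f g₁ g₂ z
      have hz := h z
      simp only [Pi.neg_apply]
      linear_combination hz - hk
    · intro hc z
      have hk := key_lemma P Bnd f g₁ g₂ z
      have hz := congrFun hc z
      simp only [Pi.neg_apply] at hz
      linear_combination hk + hz
  -- the canonical solution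
  set u₀ : X → ℂ := fun x => if hx : x ∈ Bndᶜ then uStarD P Bnd f g₁ g₂ ⟨x, hx⟩ else g₂ x
    with hu₀
  have hu₀B : restr Bnd u₀ = restr Bnd g₂ := by
    funext z
    have hz : z.1 ∉ Bndᶜ := by simp [Finset.mem_compl, z.2]
    show u₀ z.1 = g₂ z.1
    rw [hu₀]
    simp only [dif_neg hz]
  have hu₀A : restr Bndᶜ u₀ = uStarD P Bnd f g₁ g₂ := by
    funext z
    show u₀ z.1 = uStarD P Bnd f g₁ g₂ z
    rw [hu₀]
    simp only [dif_pos z.2]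
  refine ⟨?_, ?_, ?_⟩
  · constructor
    · rintro ⟨u, hu⟩
      exact hcompat.2 ((char u).1 hu).2.2
    · intro hc
      exact ⟨u₀, (char u₀).2 ⟨hu₀B, hu₀A, hcompat.1 hc⟩⟩
  · intro hc
    refine ⟨u₀, (char u₀).2 ⟨hu₀B, hu₀A, hcompat.1 hc⟩, ?_⟩
    intro u' hu'
    obtain ⟨h1, h2, _⟩ := (char u').1 hu'
    funext x
    by_cases hx : x ∈ Bndᶜ
    · have e1 : u' x = uStarD P Bnd f g₁ g₂ ⟨x, hx⟩ := congrFun h2 ⟨x, hx⟩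
      have e2 : u₀ x = uStarD P Bnd f g₁ g₂ ⟨x, hx⟩ := congrFun hu₀A ⟨x, hx⟩
      rw [e1, e2]
    · have hxB : x ∈ Bnd := by
        by_contra hxB
        exact hx (Finset.mem_compl.2 hxB)
      have e1 : u' x = g₂ x := congrFun h1 ⟨x, hxB⟩
      have e2 : u₀ x = g₂ x := congrFun hu₀B ⟨x, hxB⟩
      rw [e1, e2]
  · intro u hu x
    obtain ⟨h1, h2, _⟩ := (char u).1 hu
    by_cases hx : x ∈ Bnd
    · rw [greenExt_bnd P Bnd _ x hx, greenExt_bnd P Bnd _ x hx, nu_bnd P Bnd g₂ x hx,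
        zero_add, zero_add]
      exact congrFun h1 ⟨x, hx⟩
    · have hx' : x ∈ Bndᶜ := Finset.mem_compl.2 hx
      have hr1 : restr Bndᶜ (mulVecC (greenExt P Bndᶜ) f) = cGc P Bnd *ᵥ restr Bndᶜ f :=
        funext fun z => greenExt_int P Bnd f z.1 z.2
      have hr2 : restr Bndᶜ (fun z => ∑ y ∈ Bnd, (nuGen P Bndᶜ Bnd z y : ℂ) * g₁ y)
          = cGc P Bnd *ᵥ (cPABc P Bnd *ᵥ restr Bnd g₁) :=
        funext fun z => nu_int P Bnd g₁ z.1 z.2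
      rw [greenExt_int P Bnd _ x hx', greenExt_int P Bnd _ x hx', nu_int P Bnd g₂ x hx',
        hr1, hr2]
      have e1 : u x = uStarD P Bnd f g₁ g₂ ⟨x, hx'⟩ := congrFun h2 ⟨x, hx'⟩
      rw [e1, uStarD]
      simp only [Pi.add_apply]
end
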